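/- The group defined by the presentation ⟨h, x | h⁶, x² h³ x⁻¹ h⟩ (the quotient of the free group on two generators h, x by the normal closure of the relators h⁶ and x² h³ x⁻¹ h) is finite of order 54. -/

import Mathlib

/-!
Put `τ = x h⁴`. The relators force `x h` and `h³` to be involutions, so `h³` inverts `τ = (x h) h³`,
and they force `h τ h⁻¹ = τ²`. Then `τ⁻¹ = h³ τ h⁻³ = τ⁸` gives `τ⁹ = 1`, so `⟨τ⟩` is normal and
every element is `τ^i h^j` with `i < 9`, `j < 6`. These 54 elements are distinct: `h ↦ (t ↦ 2t)`,
`x ↦ (t ↦ 4t + 1)` defines an action on `ZMod 9` in which `τ^i h^j` acts as `t ↦ 2^j t + i`.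
-/

/-- The relators `h⁶` and `x² h³ x⁻¹ h` in the free group on two generators
`h = of 0`, `x = of 1`. -/
def stmt19Rels : Set (FreeGroup (Fin 2)) :=
  {FreeGroup.of 0 ^ 6,
   FreeGroup.of 1 ^ 2 * FreeGroup.of 0 ^ 3 * (FreeGroup.of 1)⁻¹ * FreeGroup.of 0}

open scoped Pointwise

namespace Subgroup

variable {G : Type*} [Group G] {a b : G}

theorem zpowers_normal_of_conj_mem_zpowers (hgen : closure {a, b} = ⊤) (ha : IsOfFinOrder a)
    (hconj : b * a * b⁻¹ ∈ zpowers a) : (zpowers a).Normal := by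
  have : Finite (zpowers a : Set G) := ha.finite_zpowers
  rw [← normalizer_eq_top_iff, eq_top_iff, ← hgen, closure_le, Set.insert_subset_iff,
    Set.singleton_subset_iff]
  refine ⟨le_normalizer (mem_zpowers a), mem_normalizer_fintype ?_⟩
  rintro _ ⟨k, rfl⟩
  simpa only [conj_zpow, SetLike.mem_coe] using zpow_mem hconj k

theorem coe_zpowers_mul_coe_zpowers_eq_univ (hgen : closure {a, b} = ⊤) (ha : IsOfFinOrder a)
    (hconj : b * a * b⁻¹ ∈ zpowers a) :
    (zpowers a : Set G) * (zpowers b : Set G) = Set.univ := by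
  have := zpowers_normal_of_conj_mem_zpowers hgen ha hconj
  rw [← normal_mul, zpowers_eq_closure, zpowers_eq_closure, ← closure_union, ← Set.insert_eq,
    hgen, coe_top]

theorem finite_of_coe_zpowers_mul_coe_zpowers_eq_univ (ha : IsOfFinOrder a) (hb : IsOfFinOrder b)
    (h : (zpowers a : Set G) * (zpowers b : Set G) = Set.univ) : Finite G :=
  Set.finite_univ_iff.1 <| h ▸ ha.finite_zpowers.mul hb.finite_zpowers

theorem natCard_le_orderOf_mul_orderOf
    (h : (zpowers a : Set G) * (zpowers b : Set G) = Set.univ) :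
    Nat.card G ≤ orderOf a * orderOf b := by
  rw [← Nat.card_zpowers a, ← Nat.card_zpowers b, ← Nat.card_univ, ← h]
  exact Set.natCard_mul_le

end Subgroup

theorem pow_mul_mul_inv_pow_of_conj_eq_pow {G : Type*} [Group G] {g t : G} {k : ℕ}
    (h : g * t * g⁻¹ = t ^ k) (n : ℕ) : g ^ n * t * (g ^ n)⁻¹ = t ^ k ^ n := by
  induction n with
  | zero => simp
  | succ n ih =>
    rw [pow_succ', pow_succ', pow_mul, ← h, conj_pow, ← ih]
    group

namespace Stmt19

section Relations

variable {G : Type*} [Group G] {h x : G}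

theorem mul_mul_self_eq_one (h6 : h ^ 6 = 1) (hr : x ^ 2 * h ^ 3 * x⁻¹ * h = 1) :
    x * h * (x * h) = 1 := by
  have hs : (h ^ 3)⁻¹ = h ^ 3 := inv_eq_of_mul_eq_one_right (by rw [← pow_add, h6])
  have e : h ^ 3 = x⁻¹ ^ 2 * h⁻¹ * x := by
    calc h ^ 3 = x⁻¹ ^ 2 * (x ^ 2 * h ^ 3 * x⁻¹ * h) * h⁻¹ * x := by group
    _ = _ := by rw [hr]; group
  calc x * h * (x * h) = x ^ 2 * (h ^ 3)⁻¹ * x⁻¹ * h := by rw [e]; group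
  _ = 1 := by rw [hs, hr]

theorem conj_mul_pow_four (h6 : h ^ 6 = 1) (hr : x ^ 2 * h ^ 3 * x⁻¹ * h = 1) :
    h * (x * h ^ 4) * h⁻¹ = (x * h ^ 4) ^ 2 := by
  have hu : (x * h)⁻¹ = x * h := inv_eq_of_mul_eq_one_right (mul_mul_self_eq_one h6 hr)
  have hconj : x * h * h ^ 3 * (x * h) = h * (x * h) * h⁻¹ := by
    calc x * h * h ^ 3 * (x * h) = x * h * h ^ 3 * (x * h)⁻¹ := by rw [hu]
    _ = h * (x * h)⁻¹ * (x ^ 2 * h ^ 3 * x⁻¹ * h) * h⁻¹ := by group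
    _ = h * (x * h) * h⁻¹ := by rw [hr, hu]; group
  calc h * (x * h ^ 4) * h⁻¹ = h * (x * h) * h⁻¹ * h ^ 3 := by group
  _ = x * h * h ^ 3 * (x * h) * h ^ 3 := by rw [hconj]
  _ = (x * h ^ 4) ^ 2 := by rw [sq]; group

theorem mul_pow_four_pow_nine (h6 : h ^ 6 = 1) (hr : x ^ 2 * h ^ 3 * x⁻¹ * h = 1) :
    (x * h ^ 4) ^ 9 = 1 := by
  have hs : (h ^ 3)⁻¹ = h ^ 3 := inv_eq_of_mul_eq_one_right (by rw [← pow_add, h6])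
  have hu : (x * h)⁻¹ = x * h := inv_eq_of_mul_eq_one_right (mul_mul_self_eq_one h6 hr)
  have hinv : h ^ 3 * (x * h ^ 4) * (h ^ 3)⁻¹ = (x * h ^ 4)⁻¹ := by
    calc h ^ 3 * (x * h ^ 4) * (h ^ 3)⁻¹ = h ^ 3 * (x * h) := by group
    _ = (h ^ 3)⁻¹ * (x * h)⁻¹ := by rw [hs, hu]
    _ = (x * h ^ 4)⁻¹ := by group
  rw [pow_mul_mul_inv_pow_of_conj_eq_pow (conj_mul_pow_four h6 hr)] at hinv
  rw [show 9 = 2 ^ 3 + 1 from rfl, pow_succ, hinv, inv_mul_cancel]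

end Relations

abbrev G := PresentedGroup stmt19Rels

def h : G := PresentedGroup.of 0

def x : G := PresentedGroup.of 1

theorem h_pow_six : h ^ 6 = 1 := by
  have := PresentedGroup.one_of_mem (rels := stmt19Rels) (Set.mem_insert _ _)
  rwa [map_pow] at this

theorem relator_eq_one : x ^ 2 * h ^ 3 * x⁻¹ * h = 1 := by
  have := PresentedGroup.one_of_mem (rels := stmt19Rels) (Set.mem_insert_of_mem _ rfl)
  rwa [map_mul, map_mul, map_mul, map_pow, map_pow, map_inv] at this

theorem closure_mul_pow_four_h : Subgroup.closure {x * h ^ 4, h} = ⊤ := by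
  have hh : h ∈ Subgroup.closure {x * h ^ 4, h} := Subgroup.subset_closure (by simp)
  have hτ : x * h ^ 4 ∈ Subgroup.closure {x * h ^ 4, h} := Subgroup.subset_closure (by simp)
  rw [eq_top_iff, ← PresentedGroup.closure_range_of, Subgroup.closure_le]
  rintro _ ⟨i, rfl⟩
  fin_cases i
  · exact hh
  · show x ∈ _
    simpa using mul_mem hτ (inv_mem (pow_mem hh 4))

theorem isOfFinOrder_mul_pow_four : IsOfFinOrder (x * h ^ 4) :=
  isOfFinOrder_iff_pow_eq_one.2 ⟨9, by norm_num, mul_pow_four_pow_nine h_pow_six relator_eq_one⟩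

theorem isOfFinOrder_h : IsOfFinOrder h :=
  isOfFinOrder_iff_pow_eq_one.2 ⟨6, by norm_num, h_pow_six⟩

theorem coe_zpowers_mul_coe_zpowers_eq_univ :
    (Subgroup.zpowers (x * h ^ 4) : Set G) * (Subgroup.zpowers h : Set G) = Set.univ :=
  Subgroup.coe_zpowers_mul_coe_zpowers_eq_univ closure_mul_pow_four_h isOfFinOrder_mul_pow_four
    ((conj_mul_pow_four h_pow_six relator_eq_one).symm ▸ pow_mem (Subgroup.mem_zpowers _) 2)

instance : Finite G :=
  Subgroup.finite_of_coe_zpowers_mul_coe_zpowers_eq_univ isOfFinOrder_mul_pow_four isOfFinOrder_h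
    coe_zpowers_mul_coe_zpowers_eq_univ

theorem natCard_le : Nat.card G ≤ 54 :=
  calc Nat.card G ≤ orderOf (x * h ^ 4) * orderOf h :=
        Subgroup.natCard_le_orderOf_mul_orderOf coe_zpowers_mul_coe_zpowers_eq_univ
  _ ≤ 9 * 6 := Nat.mul_le_mul
        (orderOf_le_of_pow_eq_one (by norm_num) (mul_pow_four_pow_nine h_pow_six relator_eq_one))
        (orderOf_le_of_pow_eq_one (by norm_num) h_pow_six)

def hPerm : Equiv.Perm (ZMod 9) := ⟨(2 * ·), (5 * ·), by decide, by decide⟩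

def xPerm : Equiv.Perm (ZMod 9) := ⟨(4 * · + 1), (7 * · + 2), by decide, by decide⟩

theorem lift_perm_eq_one : ∀ r ∈ stmt19Rels, FreeGroup.lift ![hPerm, xPerm] r = 1 := by
  rintro _ (rfl | rfl) <;>
  · simp only [map_mul, map_pow, map_inv, FreeGroup.lift_apply_of]
    ext t
    revert t
    decide

def toPerm : G →* Equiv.Perm (ZMod 9) := PresentedGroup.toGroup lift_perm_eq_one

theorem toPerm_normal_form_apply (i : ZMod 9) (j : Fin 6) (t : ZMod 9) :
    toPerm ((x * h ^ 4) ^ i.val * h ^ (j : ℕ)) t = 2 ^ (j : ℕ) * t + i := by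
  simp only [map_mul, map_pow, toPerm, h, x, PresentedGroup.toGroup.of]
  revert i j t
  decide

theorem two_pow_injective : Function.Injective fun j : Fin 6 ↦ (2 : ZMod 9) ^ (j : ℕ) := by
  decide

theorem normal_form_injective :
    Function.Injective fun p : ZMod 9 × Fin 6 ↦ (x * h ^ 4) ^ p.1.val * h ^ (p.2 : ℕ) := by
  rintro ⟨i, j⟩ ⟨i', j'⟩ hp
  have at0 := DFunLike.congr_fun (congrArg toPerm hp) 0
  have at1 := DFunLike.congr_fun (congrArg toPerm hp) 1
  simp only [toPerm_normal_form_apply, mul_zero, zero_add, mul_one] at at0 at1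
  subst at0
  rw [two_pow_injective (add_right_cancel at1)]

theorem le_natCard : 54 ≤ Nat.card G :=
  calc 54 = Nat.card (ZMod 9 × Fin 6) := by simp
  _ ≤ Nat.card G := Nat.card_le_card_of_injective _ normal_form_injective

end Stmt19

/-- The group `⟨h, x | h⁶, x² h³ x⁻¹ h⟩` is finite of order `54`. -/
theorem stmt_19 : Nat.card (PresentedGroup stmt19Rels) = 54 :=
  le_antisymm Stmt19.natCard_le Stmt19.le_natCard
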